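/- arXiv:2205.14650 — 5 statements merged into one kernel-verified Lean document; each statement's English description precedes it below -/
import Mathlib

section
/- Let φ be a permutation of a finite set V and Φ the induced permutation on unordered pairs. Suppose u ≠ v lie in the same cycle of φ, of length x. Then the orbit of {u,v} under Φ has length x, unless x is even and v = φ^{x/2}(u), in which case the orbit has length x/2. -/
/-!
If `v = φ^[k] u`, then `Φ^[n]` fixes `{u, v}` either by fixing both points, which forces the
period `x` of `u` to divide `n`, or by swapping them. Since `Φ^[x]` fixes the pair, its period `p`
divides `x`; in the swapping case `p ≠ x` (as `u ≠ v`) while `x ∣ 2p`, so `x = 2p` and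
`v = φ^[x/2] u`. Conversely, if `v = φ^[x/2] u` then `Φ^[x/2]` swaps `u` and `v`.
-/

open Function

namespace Sym2

variable {α : Type*}

theorem iterate_map_mk (f : α → α) (n : ℕ) (a b : α) :
    (map f)^[n] s(a, b) = s(f^[n] a, f^[n] b) := by
  induction n with
  | zero => rfl
  | succ n ih => simp only [iterate_succ_apply', ih, map_mk]

theorem isPeriodicPt_map_mk_iff {f : α → α} {n : ℕ} {a b : α} :
    IsPeriodicPt (map f) n s(a, b) ↔
      (f^[n] a = a ∧ f^[n] b = b) ∨ (f^[n] a = b ∧ f^[n] b = a) := by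
  rw [IsPeriodicPt, IsFixedPt, iterate_map_mk, eq_iff]

end Sym2

theorem Nat.eq_two_mul_of_dvd_of_dvd_two_mul {p x : ℕ} (hx : 0 < x) (hpx : p ∣ x)
    (hxp : x ∣ 2 * p) (hne : p ≠ x) : x = 2 * p := by
  obtain ⟨c, rfl⟩ := hpx
  have hp : 0 < p := Nat.pos_of_mul_pos_right hx
  have hc : c ∣ 2 := Nat.dvd_of_mul_dvd_mul_left hp (by rwa [mul_comm 2] at hxp)
  have hc0 : 0 < c := Nat.pos_of_mul_pos_left hx
  have hc2 : c ≤ 2 := Nat.le_of_dvd two_pos hc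
  interval_cases c
  · simp at hne
  · ring

section PairOrbit

variable {α : Type*} {f : α → α} {u v : α}

theorem minimalPeriod_sym2_map_dvd {k : ℕ} (hv : f^[k] u = v) :
    minimalPeriod (Sym2.map f) s(u, v) ∣ minimalPeriod f u := by
  have hu := isPeriodicPt_minimalPeriod f u
  exact (Sym2.isPeriodicPt_map_mk_iff.2 (Or.inl ⟨hu, hv ▸ hu.apply_iterate k⟩)).minimalPeriod_dvd

theorem minimalPeriod_sym2_map_eq_or {k : ℕ} (hu : 0 < minimalPeriod f u) (hv : f^[k] u = v)
    (huv : u ≠ v) :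
    minimalPeriod (Sym2.map f) s(u, v) = minimalPeriod f u ∨
      (minimalPeriod f u = 2 * minimalPeriod (Sym2.map f) s(u, v) ∧
        f^[minimalPeriod (Sym2.map f) s(u, v)] u = v) := by
  have hpx := minimalPeriod_sym2_map_dvd hv
  rcases Sym2.isPeriodicPt_map_mk_iff.1 (isPeriodicPt_minimalPeriod (Sym2.map f) s(u, v)) with
    ⟨hfix, -⟩ | ⟨hswap, hswap'⟩
  · exact Or.inl (Nat.dvd_antisymm hpx (IsPeriodicPt.minimalPeriod_dvd hfix))
  · refine Or.inr ⟨?_, hswap⟩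
    set p := minimalPeriod (Sym2.map f) s(u, v)
    have h2p : IsPeriodicPt f (2 * p) u := by
      rw [IsPeriodicPt, IsFixedPt, two_mul, iterate_add_apply, hswap, hswap']
    have hne : p ≠ minimalPeriod f u := by
      intro h
      apply huv
      rw [← hswap, h, iterate_minimalPeriod]
    exact Nat.eq_two_mul_of_dvd_of_dvd_two_mul hu hpx h2p.minimalPeriod_dvd hne

theorem isPeriodicPt_sym2_map_half (he : Even (minimalPeriod f u))
    (hv : f^[minimalPeriod f u / 2] u = v) :
    IsPeriodicPt (Sym2.map f) (minimalPeriod f u / 2) s(u, v) := by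
  refine Sym2.isPeriodicPt_map_mk_iff.2 (Or.inr ⟨hv, ?_⟩)
  rw [← hv, ← iterate_add_apply, ← two_mul, Nat.mul_div_cancel' he.two_dvd, iterate_minimalPeriod]

end PairOrbit

theorem orbit_length_of_pair_in_same_cycle_general
    {V : Type*} [Fintype V] (φ : Equiv.Perm V)
    (u v : V) (huv : u ≠ v) (x : ℕ)
    (hx : x = Function.minimalPeriod φ u)
    (hsame : ∃ k : ℕ, φ^[k] u = v) :
    (¬(Even x ∧ φ^[x / 2] u = v) →
        Function.minimalPeriod (Sym2.map φ) s(u, v) = x) ∧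
    ((Even x ∧ φ^[x / 2] u = v) →
        Function.minimalPeriod (Sym2.map φ) s(u, v) = x / 2) := by
  obtain ⟨k, hk⟩ := hsame
  subst hx
  have hpos := minimalPeriod_pos_of_mem_periodicPts (φ.injective.mem_periodicPts u)
  have hcases := minimalPeriod_sym2_map_eq_or hpos hk huv
  constructor
  · intro hnot
    refine hcases.resolve_right fun ⟨h2, hp⟩ ↦ hnot ⟨⟨_, h2.trans (two_mul _)⟩, ?_⟩
    rwa [h2, Nat.mul_div_cancel_left _ two_pos]
  · rintro ⟨he, hhalf⟩
    have hdvd := (isPeriodicPt_sym2_map_half he hhalf).minimalPeriod_dvd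
    have hle := Nat.le_of_dvd (by obtain ⟨r, hr⟩ := he; omega) hdvd
    omega

/-- For a permutation `φ` of a finite set `V` and the induced permutation `Sym2.map φ` on
unordered pairs: if `u ≠ v` lie in the same cycle of `φ`, of length `x` (= minimal period),
then the orbit of `s(u,v)` has length `x`, unless `x` is even and `v = φ^[x/2] u`, in which
case the orbit has length `x/2`. -/
theorem orbit_length_of_pair_in_same_cycle
    {V : Type*} [Fintype V] [DecidableEq V] (φ : Equiv.Perm V)
    (u v : V) (huv : u ≠ v) (x : ℕ)
    (hx : x = Function.minimalPeriod φ u)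
    (hsame : ∃ k : ℕ, φ^[k] u = v) :
    (¬(Even x ∧ φ^[x / 2] u = v) →
        Function.minimalPeriod (Sym2.map φ) s(u, v) = x) ∧
    ((Even x ∧ φ^[x / 2] u = v) →
        Function.minimalPeriod (Sym2.map φ) s(u, v) = x / 2) :=
  orbit_length_of_pair_in_same_cycle_general φ u v huv x hx hsame
end

section
/- Fix n ≥ 1, a positive integer N, a subset A of an n-element set V with |A| = T, and nonnegative integers n₁,…,n_N with Σ_{k=1}^N k·n_k ≤ T. The number of injections σ : A → 𝖵 (where |𝖵| = n) such that some (equivalently, every) bijective extension π of σ satisfies: the permutation π⁻¹ ∘ π* has exactly n_k cycles of length k entirely contained in A for each 1 ≤ k ≤ N, is at most n(n−1)⋯(n−T+1) / (∏_{k=1}^N k^{n_k} n_k!), where π* is a fixed bijection V → 𝖵. -/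
/-!
Write `φ = π⁻¹ ∘ π*`, where `π` is any extension of `σ`. A *marking* lists, for each `k`,
`n_k` distinct `k`-cycles of `φ` inside `A` together with a starting point on each, as an
injection `g` of the `m = ∑ k n_k` positions `(k, j, i)` into `A` with `φ (g p) = g (p + 1)`;
the latter says `σ (g (p + 1)) = π* (g p)`, so markings depend on `σ` alone. Each admissible
`σ` has at least `∏ k^{n_k} n_k!` markings (order the cycles, pick starting points). Conversely
a marking fixes `σ` on the `m` marked points, so the pairs `(σ, g)` number at most
`T(T-1)⋯(T-m+1) · (n-m)(n-m-1)⋯(n-T+1) ≤ n(n-1)⋯(n-T+1)`.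
-/

open Function Finset

theorem Cycle.mem_toFinset {α : Type*} [DecidableEq α] {s : Cycle α} {a : α} :
    a ∈ s.toFinset ↔ a ∈ s :=
  Quotient.inductionOn' s fun _ => by simp

namespace Function
variable {α : Type*} [DecidableEq α] (f : α → α)

theorem card_toFinset_periodicOrbit (x : α) :
    #(periodicOrbit f x).toFinset = minimalPeriod f x := by
  have hnodup := nodup_periodicOrbit (f := f) (x := x)
  rw [periodicOrbit_def, Cycle.nodup_coe_iff] at hnodup
  rw [periodicOrbit_def, Cycle.coe_toFinset, List.toFinset_card_of_nodup hnodup,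
    List.length_map, List.length_range]

end Function

open scoped Classical in
noncomputable def cyclePointsIn {α : Type*} (f : α → α) (A : Finset α) (k : ℕ) : Finset α :=
  {v ∈ A | minimalPeriod f v = k ∧ ∀ i, f^[i] v ∈ A}

noncomputable def cycleOrbitsIn {α : Type*} [DecidableEq α] (f : α → α) (A : Finset α) (k : ℕ) :
    Finset (Cycle α) :=
  (cyclePointsIn f A k).image (periodicOrbit f)

section CyclePoints
variable {α : Type*} {f : α → α} {A : Finset α} {k : ℕ} {v w : α}

theorem mem_cyclePointsIn :
    v ∈ cyclePointsIn f A k ↔ v ∈ A ∧ minimalPeriod f v = k ∧ ∀ i, f^[i] v ∈ A := by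
  simp [cyclePointsIn]

theorem coe_cyclePointsIn :
    (cyclePointsIn f A k : Set α) = {v | v ∈ A ∧ minimalPeriod f v = k ∧ ∀ i, f^[i] v ∈ A} := by
  ext; exact mem_cyclePointsIn

theorem mem_periodicPts_of_mem_cyclePointsIn (hk : 0 < k) (hv : v ∈ cyclePointsIn f A k) :
    v ∈ periodicPts f := by
  rw [← minimalPeriod_pos_iff_mem_periodicPts, (mem_cyclePointsIn.1 hv).2.1]
  exact hk

theorem iterate_mem_cyclePointsIn (hk : 0 < k) (hv : v ∈ cyclePointsIn f A k) (n : ℕ) :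
    f^[n] v ∈ cyclePointsIn f A k := by
  obtain ⟨-, hper, horbit⟩ := mem_cyclePointsIn.1 hv
  refine mem_cyclePointsIn.2 ⟨horbit n, ?_, fun i => ?_⟩
  · rw [minimalPeriod_apply_iterate (mem_periodicPts_of_mem_cyclePointsIn hk hv), hper]
  · rw [← iterate_add_apply]; exact horbit _

variable [DecidableEq α]

theorem mem_toFinset_periodicOrbit_iff (hk : 0 < k) (hv : v ∈ cyclePointsIn f A k) :
    w ∈ (periodicOrbit f v).toFinset ↔
      w ∈ cyclePointsIn f A k ∧ periodicOrbit f w = periodicOrbit f v := by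
  have hvper := mem_periodicPts_of_mem_cyclePointsIn hk hv
  constructor
  · intro hw
    rw [Cycle.mem_toFinset, mem_periodicOrbit_iff hvper] at hw
    obtain ⟨n, rfl⟩ := hw
    exact ⟨iterate_mem_cyclePointsIn hk hv n, periodicOrbit_apply_iterate_eq hvper n⟩
  · rintro ⟨hw, hwv⟩
    rw [Cycle.mem_toFinset, ← hwv]
    exact self_mem_periodicOrbit (mem_periodicPts_of_mem_cyclePointsIn hk hw)

theorem card_cyclePointsIn (hk : 0 < k) :
    #(cyclePointsIn f A k) = k * #(cycleOrbitsIn f A k) := by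
  rw [card_eq_sum_card_image (periodicOrbit f), mul_comm, ← smul_eq_mul, ← sum_const]
  refine sum_congr rfl fun o ho => ?_
  obtain ⟨v, hv, rfl⟩ := mem_image.1 ho
  have hfiber : {w ∈ cyclePointsIn f A k | periodicOrbit f w = periodicOrbit f v} =
      (periodicOrbit f v).toFinset := by
    ext w
    rw [mem_filter, mem_toFinset_periodicOrbit_iff hk hv]
  rw [hfiber, card_toFinset_periodicOrbit, (mem_cyclePointsIn.1 hv).2.1]

theorem periodicOrbit_eq_of_mem_cycleOrbitsIn {o : Cycle α} (hk : 0 < k)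
    (ho : o ∈ cycleOrbitsIn f A k) (hw : w ∈ o.toFinset) :
    w ∈ cyclePointsIn f A k ∧ periodicOrbit f w = o := by
  obtain ⟨v, hv, rfl⟩ := mem_image.1 ho
  exact (mem_toFinset_periodicOrbit_iff hk hv).1 hw

theorem card_toFinset_of_mem_cycleOrbitsIn {o : Cycle α} (ho : o ∈ cycleOrbitsIn f A k) :
    #o.toFinset = k := by
  obtain ⟨v, hv, rfl⟩ := mem_image.1 ho
  rw [card_toFinset_periodicOrbit, (mem_cyclePointsIn.1 hv).2.1]

end CyclePoints

theorem Function.iterate_finRotate {α : Type*} {f : α → α} {x : α} {k : ℕ}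
    (hx : minimalPeriod f x = k) (i : Fin k) : f^[finRotate k i] x = f (f^[i] x) := by
  rw [← iterate_succ_apply' f]
  cases k with
  | zero => exact i.elim0
  | succ k =>
    rw [coe_finRotate]
    split_ifs with h
    · rw [h, Fin.val_last, iterate_zero_apply, Nat.succ_eq_add_one, ← hx, iterate_minimalPeriod]
    · rfl

/-- Position `(k, j, i)` is the `i`-th point of the `j`-th marked `k`-cycle. -/
abbrev CycleIdx (K : Finset ℕ) (c : ℕ → ℕ) : Type := Σ k : K, Fin (c k) × Fin k

def CycleIdx.rotate (K : Finset ℕ) (c : ℕ → ℕ) : Equiv.Perm (CycleIdx K c) :=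
  Equiv.sigmaCongrRight fun k => (Equiv.refl _).prodCongr (finRotate k)

theorem CycleIdx.card (K : Finset ℕ) (c : ℕ → ℕ) :
    Fintype.card (CycleIdx K c) = ∑ k ∈ K, k * c k := by
  simp [Fintype.card_sigma, mul_comm]

section Marking
variable {α : Type*} [DecidableEq α] {f : α → α} {A : Finset α} {K : Finset ℕ} {c : ℕ → ℕ}

variable (f A K c) in
abbrev CycleBasePoints : Type _ :=
  Π k : K, Σ e : Fin (c k) ↪ cycleOrbitsIn f A k, Π j, (e j : Cycle α).toFinset

namespace CycleBasePoints

variable (f A K c) in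
theorem card :
    Fintype.card (CycleBasePoints f A K c) =
      ∏ k ∈ K, (#(cycleOrbitsIn f A k)).descFactorial (c k) * k ^ c k := by
  rw [Fintype.card_pi, ← prod_coe_sort K]
  refine prod_congr rfl fun k _ => ?_
  have hfiber : ∀ e : Fin (c k) ↪ cycleOrbitsIn f A k,
      Fintype.card (Π j, (e j : Cycle α).toFinset) = k ^ c k := by
    intro e
    simp [Fintype.card_pi, card_toFinset_of_mem_cycleOrbitsIn (e _).2]
  rw [Fintype.card_sigma, sum_congr rfl fun e _ => hfiber e, sum_const, card_univ,
    Fintype.card_embedding_eq, Fintype.card_fin, Fintype.card_coe, smul_eq_mul]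

def trace (x : CycleBasePoints f A K c) (q : CycleIdx K c) : α :=
  f^[q.2.2] ((x q.1).2 q.2.1)

variable (hK : ∀ k ∈ K, 0 < k)
include hK

theorem base_spec (x : CycleBasePoints f A K c) (k : K) (j : Fin (c k)) :
    ((x k).2 j : α) ∈ cyclePointsIn f A k ∧ periodicOrbit f ((x k).2 j) = (x k).1 j :=
  periodicOrbit_eq_of_mem_cycleOrbitsIn (hK k k.2) ((x k).1 j).2 ((x k).2 j).2

theorem trace_mem (x : CycleBasePoints f A K c) (q : CycleIdx K c) : trace x q ∈ A :=
  (mem_cyclePointsIn.1 (base_spec hK x q.1 q.2.1).1).2.2 _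

theorem apply_trace (x : CycleBasePoints f A K c) (q : CycleIdx K c) :
    f (trace x q) = trace x (CycleIdx.rotate K c q) :=
  (iterate_finRotate (mem_cyclePointsIn.1 (base_spec hK x q.1 q.2.1).1).2.1 q.2.2).symm

theorem trace_injective (x : CycleBasePoints f A K c) : Injective (trace x) := by
  rintro ⟨k, j, i⟩ ⟨k', j', i'⟩ h
  dsimp only [trace] at h
  obtain ⟨hb, hbo⟩ := base_spec hK x k j
  obtain ⟨hb', hbo'⟩ := base_spec hK x k' j'
  have hper := mem_periodicPts_of_mem_cyclePointsIn (hK k k.2) hb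
  have hper' := mem_periodicPts_of_mem_cyclePointsIn (hK k' k'.2) hb'
  obtain rfl : k = k' := Subtype.ext <| by
    rw [← (mem_cyclePointsIn.1 hb).2.1, ← (mem_cyclePointsIn.1 hb').2.1,
      ← minimalPeriod_apply_iterate hper i, h, minimalPeriod_apply_iterate hper' i']
  obtain rfl : j = j' := (x k).1.injective <| Subtype.ext <| by
    rw [← hbo, ← hbo', ← periodicOrbit_apply_iterate_eq hper i, h,
      periodicOrbit_apply_iterate_eq hper' i']
  have hmin := (mem_cyclePointsIn.1 hb).2.1
  obtain rfl : i = i' := Fin.ext <|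
    (iterate_eq_iterate_iff_of_lt_minimalPeriod (hmin.symm ▸ i.2) (hmin.symm ▸ i'.2)).1 h
  rfl

theorem eq_of_base_eq {k : K} {p p' : Σ e : Fin (c k) ↪ cycleOrbitsIn f A k,
    Π j, (e j : Cycle α).toFinset} (h : ∀ j, (p.2 j : α) = p'.2 j) : p = p' := by
  obtain ⟨e, b⟩ := p
  obtain ⟨e', b'⟩ := p'
  obtain rfl : e = e' := Embedding.ext fun j => Subtype.ext <| by
    rw [← (periodicOrbit_eq_of_mem_cycleOrbitsIn (hK k k.2) (e j).2 (b j).2).2,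
      ← (periodicOrbit_eq_of_mem_cycleOrbitsIn (hK k k.2) (e' j).2 (b' j).2).2, h j]
  obtain rfl : b = b' := funext fun j => Subtype.ext (h j)
  rfl

theorem injective_trace : Injective (trace : CycleBasePoints f A K c → _) := by
  intro x y hxy
  funext k
  exact eq_of_base_eq hK fun j => congrFun hxy ⟨k, j, ⟨0, hK k k.2⟩⟩

end CycleBasePoints
end Marking

theorem prod_le_card_cycleMarkings {α : Type*} [DecidableEq α] {f : α → α} {A : Finset α}
    {K : Finset ℕ} {c : ℕ → ℕ} (hK : ∀ k ∈ K, 0 < k)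
    (hc : ∀ k ∈ K, k * c k ≤ #(cyclePointsIn f A k)) :
    ∏ k ∈ K, k ^ c k * (c k).factorial ≤
      #{g : CycleIdx K c ↪ A | ∀ q, f (g q) = g (CycleIdx.rotate K c q)} := by
  calc ∏ k ∈ K, k ^ c k * (c k).factorial
      ≤ ∏ k ∈ K, (#(cycleOrbitsIn f A k)).descFactorial (c k) * k ^ c k := by
        refine prod_le_prod' fun k hk => ?_
        have hck : c k ≤ #(cycleOrbitsIn f A k) := Nat.le_of_mul_le_mul_left
          ((hc k hk).trans (card_cyclePointsIn (hK k hk)).le) (hK k hk)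
        rw [mul_comm, ← Nat.descFactorial_self]
        gcongr
    _ = Fintype.card (CycleBasePoints f A K c) := (CycleBasePoints.card f A K c).symm
    _ ≤ _ := by
        rw [← Fintype.card_subtype]
        exact Fintype.card_le_of_injective
          (fun x => ⟨⟨fun q => ⟨_, CycleBasePoints.trace_mem hK x q⟩,
            fun q q' h => CycleBasePoints.trace_injective hK x (congrArg Subtype.val h)⟩,
            CycleBasePoints.apply_trace hK x⟩)
          fun x y h => CycleBasePoints.injective_trace hK <| funext fun q =>
            congrArg (fun g : {g : CycleIdx K c ↪ A // _} => (g.1 q : α)) h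

theorem Function.Injective.exists_equiv_extend {α β : Type*} [Fintype α] [Fintype β]
    (hαβ : Fintype.card α = Fintype.card β) {s : Finset α} {σ : s → β} (hσ : Injective σ) :
    ∃ π : α ≃ β, ∀ a : s, π a = σ a := by
  classical
  obtain ⟨e⟩ := Fintype.card_eq.1 hαβ
  have hext : ∀ a : s, extend Subtype.val σ e a = σ a := Subtype.val_injective.extend_apply σ e
  have hinj : Set.InjOn (extend Subtype.val σ e) s := fun a ha b hb hab =>
    congrArg Subtype.val (hσ ((hext ⟨a, ha⟩).symm.trans (hab.trans (hext ⟨b, hb⟩))))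
  obtain ⟨π, hπ⟩ := Finset.exists_equiv_extend_of_card_eq (t := univ) (by rw [card_univ, hαβ])
    (subset_univ _) hinj
  exact ⟨π.trans (Equiv.subtypeUnivEquiv mem_univ), fun a => (hπ a a.2).trans (hext a)⟩

theorem card_injective_extending_le {α β γ : Type*} [Fintype α] [Fintype β] [Fintype γ]
    (ι : γ ↪ α) (h : γ ↪ β) :
    Nat.card {σ : α → β // Injective σ ∧ ∀ c, σ (ι c) = h c} ≤
      (Fintype.card β - Fintype.card γ).descFactorial (Fintype.card α - Fintype.card γ) := by
  classical
  let restrict (σ : {σ : α → β // Injective σ ∧ ∀ c, σ (ι c) = h c}) :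
      {a // a ∉ Set.range ι} ↪ {b // b ∉ Set.range h} :=
    ⟨fun a => ⟨σ.1 a.1, fun ⟨c, hc⟩ => a.2 ⟨c, σ.2.1 ((σ.2.2 c).trans hc)⟩⟩,
      fun a a' haa' => Subtype.ext (σ.2.1 (congrArg Subtype.val haa'))⟩
  have hrestrict : Injective restrict := by
    intro σ σ' hσσ'
    refine Subtype.ext (funext fun a => ?_)
    by_cases ha : a ∈ Set.range ι
    · obtain ⟨c, rfl⟩ := ha
      rw [σ.2.2, σ'.2.2]
    · exact congrArg Subtype.val (DFunLike.congr_fun hσσ' ⟨a, ha⟩)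
  refine (Nat.card_le_card_of_injective restrict hrestrict).trans_eq ?_
  rw [Nat.card_eq_fintype_card, Fintype.card_embedding_eq, Fintype.card_subtype_compl,
    Fintype.card_subtype_compl, Set.card_range_of_injective ι.injective,
    Set.card_range_of_injective h.injective]

theorem Nat.descFactorial_mul_descFactorial_sub_le {n t m : ℕ} (htn : t ≤ n) :
    t.descFactorial m * (n - m).descFactorial (t - m) ≤ n.descFactorial t := by
  rcases le_or_gt m t with hmt | htm
  · calc t.descFactorial m * (n - m).descFactorial (t - m)
        ≤ n.descFactorial m * (n - m).descFactorial (t - m) := by gcongr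
      _ = n.descFactorial t := by rw [mul_comm, Nat.descFactorial_mul_descFactorial hmt]
  · simp [Nat.descFactorial_eq_zero_iff_lt.2 htm]

theorem card_mul_prod_le_descFactorial {V W : Type*} [Fintype V] [Fintype W] [DecidableEq V]
    [DecidableEq W] (πs : V ≃ W) (A : Finset V) {K : Finset ℕ} (hK : ∀ k ∈ K, 0 < k)
    (c : ℕ → ℕ) (s : Finset (A → W))
    (hs : ∀ σ ∈ s, Injective σ ∧ ∀ π : V ≃ W, (∀ a : A, π a = σ a) →
      ∀ k ∈ K, k * c k ≤ #(cyclePointsIn (π.symm ∘ πs) A k)) :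
    #s * ∏ k ∈ K, k ^ c k * (c k).factorial ≤ (Fintype.card W).descFactorial #A := by
  have hVW : Fintype.card V = Fintype.card W := Fintype.card_congr πs
  -- `g` is a marking for `π⁻¹ ∘ πs`, for any extension `π` of `σ`
  let r (σ : A → W) (g : CycleIdx K c ↪ A) : Prop :=
    ∀ q, σ (g (CycleIdx.rotate K c q)) = πs (g q)
  have habove : ∀ σ ∈ s, ∏ k ∈ K, k ^ c k * (c k).factorial ≤ #(univ.bipartiteAbove r σ) := by
    intro σ hσ
    obtain ⟨π, hπ⟩ := (hs σ hσ).1.exists_equiv_extend hVW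
    refine (prod_le_card_cycleMarkings hK ((hs σ hσ).2 π hπ)).trans_eq
      (congrArg card (filter_congr fun g _ => forall_congr' fun q => ?_))
    rw [← hπ, comp_apply, Equiv.symm_apply_eq, eq_comm]
  have hbelow : ∀ g ∈ (univ : Finset (CycleIdx K c ↪ A)), #(s.bipartiteBelow r g) ≤
      (Fintype.card W - ∑ k ∈ K, k * c k).descFactorial (#A - ∑ k ∈ K, k * c k) := by
    intro g _
    have hext := card_injective_extending_le ((CycleIdx.rotate K c).toEmbedding.trans g)
      ((g.trans (Embedding.subtype _)).trans πs.toEmbedding)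
    rw [Nat.card_eq_fintype_card, Fintype.card_subtype, Fintype.card_coe, CycleIdx.card] at hext
    refine le_trans (card_le_card fun σ hσ => ?_) hext
    rw [mem_bipartiteBelow] at hσ
    exact mem_filter.2 ⟨mem_univ _, (hs σ hσ.1).1, hσ.2⟩
  calc #s * ∏ k ∈ K, k ^ c k * (c k).factorial
      ≤ #(univ : Finset (CycleIdx K c ↪ A)) *
          (Fintype.card W - ∑ k ∈ K, k * c k).descFactorial (#A - ∑ k ∈ K, k * c k) :=
        card_mul_le_card_mul r habove hbelow
    _ ≤ (Fintype.card W).descFactorial #A := by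
        rw [card_univ, Fintype.card_embedding_eq, Fintype.card_coe, CycleIdx.card]
        exact Nat.descFactorial_mul_descFactorial_sub_le (hVW ▸ card_le_univ A)

theorem count_embeddings_with_cycle_profile_general
    {V W : Type*} [Fintype V] [Fintype W] [DecidableEq V] [DecidableEq W]
    (n T N : ℕ) (hW : Fintype.card W = n)
    (πs : V ≃ W) (A : Finset V) (hA : A.card = T)
    (nk : ℕ → ℕ) :
    (Nat.card {σ : A → W // Injective σ ∧
        ∀ π : V ≃ W, (∀ a : A, π (a : V) = σ a) →
          ∀ k ∈ Finset.Icc 1 N,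
            Set.ncard {v : V | v ∈ A ∧
              Function.minimalPeriod (π.symm ∘ πs) v = k ∧
              ∀ i : ℕ, (π.symm ∘ πs)^[i] v ∈ A} = k * nk k} : ℝ)
      ≤ (n.descFactorial T : ℝ) /
          ∏ k ∈ Finset.Icc 1 N, ((k : ℝ) ^ nk k * (nk k).factorial) := by
  rw [Nat.card_eq_fintype_card, Fintype.card_subtype, le_div_iff₀ (prod_pos fun k hk => by
    have := (mem_Icc.1 hk).1; positivity), ← hW, ← hA]
  norm_cast
  refine card_mul_prod_le_descFactorial πs A (fun k hk => (mem_Icc.1 hk).1) nk _ fun σ hσ => ?_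
  obtain ⟨-, hinj, hcycles⟩ := mem_filter.1 hσ
  refine ⟨hinj, fun π hπ k hk => ?_⟩
  rw [← hcycles π hπ k hk, ← coe_cyclePointsIn, Set.ncard_coe_finset]

/-- The number of injections `σ : A → 𝖵` such that every bijective extension `π` of `σ`
satisfies: the permutation `φ = π⁻¹ ∘ π*` has exactly `n_k` cycles of length `k` entirely
contained in `A`, for each `1 ≤ k ≤ N` (equivalently, the set of vertices of `A` lying on
such cycles has cardinality `k·n_k`), is at most
`n(n−1)⋯(n−T+1) / ∏_{k=1}^N k^{n_k} n_k!`. -/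
theorem count_embeddings_with_cycle_profile
    {V W : Type*} [Fintype V] [Fintype W] [DecidableEq V] [DecidableEq W]
    (n T N : ℕ) (hV : Fintype.card V = n) (hW : Fintype.card W = n)
    (πs : V ≃ W) (A : Finset V) (hA : A.card = T)
    (nk : ℕ → ℕ) (hsum : ∑ k ∈ Finset.Icc 1 N, k * nk k ≤ T) :
    (Nat.card {σ : A → W // Injective σ ∧
        ∀ π : V ≃ W, (∀ a : A, π (a : V) = σ a) →
          ∀ k ∈ Finset.Icc 1 N,
            Set.ncard {v : V | v ∈ A ∧
              Function.minimalPeriod (π.symm ∘ πs) v = k ∧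
              ∀ i : ℕ, (π.symm ∘ πs)^[i] v ∈ A} = k * nk k} : ℝ)
      ≤ (n.descFactorial T : ℝ) /
          ∏ k ∈ Finset.Icc 1 N, ((k : ℝ) ^ nk k * (nk k).factorial) :=
  count_embeddings_with_cycle_profile_general n T N hW πs A hA nk
end

section
/- The number of permutations of an n-element set that have at least n_k cycles of length k, simultaneously for each 1 ≤ k ≤ N (where n₁,…,n_N are nonnegative integers with Σ k·n_k ≤ n), is at most n! / (∏_{k=1}^N k^{n_k} · n_k!). -/
/-!
Let `c` be the permutation of `E = Σ k, Fin n_k × Fin k` made of `n_k` cycles of length `k` for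
each `k`, and count pairs `(σ, ι)` where `ι : E ↪ Fin n` intertwines `c` with `σ`. Such a pair is
determined by `ι` and the restriction of `σ` to the complement of the range of `ι`, so there are at
most `(n)_{|E|} · (n - |E|)! ≤ n!` of them. Conversely, if `σ` has `n_k` distinct cycles of
length `k`, then relabelling these cycles (`n_k!` ways) and choosing the starting point on each
(`k^{n_k}` ways) gives `∏ k^{n_k} n_k!` distinct intertwining embeddings for this `σ`.
-/

open Equiv Function Finset
open scoped Nat

theorem val_finRotate {n : ℕ} (i : Fin n) : (finRotate n i : ℕ) = (i + 1) % n := by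
  rw [finRotate_apply, Fin.val_add, Fin.val_one']
  exact Nat.add_mod_mod _ _ _

namespace Equiv.Perm

variable {α : Type*} (σ : Perm α)

theorem pow_mod_minimalPeriod_apply (x : α) (a : ℕ) :
    (σ ^ (a % minimalPeriod σ x)) x = (σ ^ a) x := by
  simp only [← iterate_eq_pow]
  exact iterate_mod_minimalPeriod_eq

theorem apply_pow_apply_eq_pow_mod {x : α} {k : ℕ} (hx : minimalPeriod σ x = k) (t : ℕ) :
    σ ((σ ^ t) x) = (σ ^ ((t + 1) % k)) x := by
  rw [← hx, pow_mod_minimalPeriod_apply, pow_succ', mul_apply]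

theorem pow_apply_injOn_Iio_minimalPeriod (x : α) :
    Set.InjOn (fun a : ℕ => (σ ^ a) x) (Set.Iio (minimalPeriod σ x)) := by
  simpa only [← iterate_eq_pow] using iterate_injOn_Iio_minimalPeriod

structure IsCycleTransversal {ι : Type*} (ℓ : ι → ℕ) (p : ι → α) : Prop where
  minimalPeriod_eq : ∀ i, minimalPeriod σ (p i) = ℓ i
  eq_of_sameCycle : ∀ {i j}, σ.SameCycle (p i) (p j) → i = j

abbrev EquivariantEmbedding {E : Type*} (c : Perm E) : Type _ :=
  {ι : E ↪ α // ∀ e, σ (ι e) = ι (c e)}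

def blockRotation {ι : Type*} (ℓ : ι → ℕ) : Perm (Σ i, Fin (ℓ i)) :=
  sigmaCongrRight fun i => finRotate (ℓ i)

variable {σ}

theorem EquivariantEmbedding.apply_mem_range_iff {E : Type*} {c : Perm E}
    (ι : σ.EquivariantEmbedding c) (x : α) : σ x ∈ Set.range ι.1 ↔ x ∈ Set.range ι.1 := by
  constructor
  · rintro ⟨e, he⟩
    refine ⟨c⁻¹ e, σ.injective ?_⟩
    rw [ι.2, ← he, ← Perm.mul_apply, mul_inv_cancel, one_apply]
  · rintro ⟨e, rfl⟩
    exact ⟨c e, (ι.2 e).symm⟩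

section Transversal

variable {ι : Type*} {ℓ : ι → ℕ} {p : ι → α}

theorem IsCycleTransversal.pow_apply_inj (hp : σ.IsCycleTransversal ℓ p) {i j : ι} {s t : ℕ}
    (hs : s < ℓ i) (ht : t < ℓ j) (h : (σ ^ s) (p i) = (σ ^ t) (p j)) : i = j ∧ s = t := by
  obtain rfl : i = j := hp.eq_of_sameCycle
    (sameCycle_pow_left.mp (sameCycle_pow_right.mp (by rw [h])))
  rw [← hp.minimalPeriod_eq i] at hs ht
  exact ⟨rfl, σ.pow_apply_injOn_Iio_minimalPeriod _ hs ht h⟩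

def IsCycleTransversal.embedding (hp : σ.IsCycleTransversal ℓ p) :
    σ.EquivariantEmbedding (blockRotation ℓ) :=
  ⟨⟨fun x => (σ ^ (x.2 : ℕ)) (p x.1), fun ⟨_, s⟩ ⟨_, t⟩ h => by
      obtain ⟨rfl, hst⟩ := hp.pow_apply_inj s.2 t.2 h
      rw [Fin.ext hst]⟩,
    fun ⟨i, s⟩ => by
      change σ ((σ ^ (s : ℕ)) (p i)) = (σ ^ (finRotate (ℓ i) s : ℕ)) (p i)
      rw [val_finRotate, σ.apply_pow_apply_eq_pow_mod (hp.minimalPeriod_eq i)]⟩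

@[simp]
theorem IsCycleTransversal.embedding_apply (hp : σ.IsCycleTransversal ℓ p)
    (x : Σ i, Fin (ℓ i)) : hp.embedding.1 x = (σ ^ (x.2 : ℕ)) (p x.1) :=
  rfl

theorem IsCycleTransversal.shift_injective {k m : ℕ} {R : Fin m → α}
    (hR : σ.IsCycleTransversal (fun _ => k) R) :
    Injective fun aπ : (Fin m → Fin k) × Perm (Fin m) =>
      fun j => (σ ^ (aπ.1 j : ℕ)) (R (aπ.2 j)) := by
  rintro ⟨a, π⟩ ⟨a', π'⟩ h
  have hj j := hR.pow_apply_inj (a j).2 (a' j).2 (congrFun h j)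
  simp only [Prod.mk.injEq]
  exact ⟨funext fun j => Fin.ext (hj j).2, Equiv.ext fun j => (hj j).1⟩

end Transversal

section Finite

variable [Finite α]

theorem minimalPeriod_pos_of_finite (σ : Perm α) (x : α) : 0 < minimalPeriod σ x :=
  minimalPeriod_pos_of_mem_periodicPts (σ.injective.mem_periodicPts x)

theorem minimalPeriod_pow_apply (σ : Perm α) (x : α) (a : ℕ) :
    minimalPeriod σ ((σ ^ a) x) = minimalPeriod σ x := by
  rw [← iterate_eq_pow]
  exact minimalPeriod_apply_iterate (σ.injective.mem_periodicPts x) a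

theorem SameCycle.exists_pow_lt_minimalPeriod {x y : α} (h : σ.SameCycle x y) :
    ∃ a < minimalPeriod σ x, (σ ^ a) x = y := by
  obtain ⟨a, rfl⟩ := h.exists_nat_pow_eq
  exact ⟨a % minimalPeriod σ x, Nat.mod_lt _ (σ.minimalPeriod_pos_of_finite x),
    σ.pow_mod_minimalPeriod_apply x a⟩

theorem SameCycle.minimalPeriod_eq {x y : α} (h : σ.SameCycle x y) :
    minimalPeriod σ x = minimalPeriod σ y := by
  obtain ⟨a, rfl⟩ := h.exists_nat_pow_eq
  exact (σ.minimalPeriod_pow_apply x a).symm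

/-- Each cycle of length `k` contributes `k` points of period `k`, so there are at least `m` such
cycles; pick one point on each. -/
theorem exists_isCycleTransversal {k m : ℕ} (hk : 0 < k)
    (h : k * m ≤ {x | minimalPeriod σ x = k}.ncard) :
    ∃ R : Fin m → α, σ.IsCycleTransversal (fun _ => k) R := by
  classical
  have := Fintype.ofFinite α
  let P : Finset α := {x | minimalPeriod σ x = k}
  let cycle : α → Quotient (SameCycle.setoid σ) := Quotient.mk _
  have hfiber : ∀ b ∈ P.image cycle, #{x ∈ P | cycle x = b} ≤ k := by
    rintro _ hb
    obtain ⟨v, hv, rfl⟩ := mem_image.mp hb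
    calc _ ≤ #((range k).image fun a => (σ ^ a) v) := card_le_card fun y hy => by
          obtain ⟨a, ha, rfl⟩ :=
            SameCycle.exists_pow_lt_minimalPeriod (Quotient.exact (mem_filter.mp hy).2).symm
          exact mem_image.mpr ⟨a, mem_range.mpr (ha.trans_eq (mem_filter.mp hv).2), rfl⟩
      _ ≤ k := card_image_le.trans (card_range k).le
  have hcycles : k * m ≤ k * #(P.image cycle) := by
    refine h.trans ?_
    rw [Set.ncard_eq_toFinset_card']
    exact (congrArg Finset.card (by ext; simp [P])).trans_le (card_le_mul_card_image _ _ hfiber)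
  obtain ⟨e⟩ : Nonempty (Fin m ↪ P.image cycle) := Function.Embedding.nonempty_of_card_le <| by
    rw [Fintype.card_fin, Fintype.card_coe]
    exact Nat.le_of_mul_le_mul_left hcycles hk
  choose rep hrepP hrep using fun b : P.image cycle => mem_image.mp b.2
  refine ⟨fun i => rep (e i), fun i => (mem_filter.mp (hrepP (e i))).2, fun {i j} hij => ?_⟩
  apply e.injective
  apply Subtype.ext
  rw [← hrep, ← hrep]
  exact Quotient.sound hij

theorem IsCycleTransversal.shift {k m : ℕ} {R : Fin m → α}
    (hR : σ.IsCycleTransversal (fun _ => k) R) (a : Fin m → Fin k) (π : Perm (Fin m)) :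
    σ.IsCycleTransversal (fun _ => k) (fun j => (σ ^ (a j : ℕ)) (R (π j))) where
  minimalPeriod_eq j := by rw [minimalPeriod_pow_apply, hR.minimalPeriod_eq]
  eq_of_sameCycle h :=
    π.injective (hR.eq_of_sameCycle (sameCycle_pow_left.mp (sameCycle_pow_right.mp h)))

theorem pow_mul_factorial_le_card_isCycleTransversal {k m : ℕ} (hk : 0 < k)
    (h : k * m ≤ {x | minimalPeriod σ x = k}.ncard) :
    k ^ m * m ! ≤ Nat.card {R : Fin m → α // σ.IsCycleTransversal (fun _ => k) R} := by
  obtain ⟨R, hR⟩ := σ.exists_isCycleTransversal hk h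
  calc k ^ m * m ! = Nat.card ((Fin m → Fin k) × Perm (Fin m)) := by
        simp [Nat.card_eq_fintype_card, Fintype.card_perm]
    _ ≤ _ := Nat.card_le_card_of_injective (fun aπ => ⟨_, hR.shift aπ.1 aπ.2⟩)
        fun _ _ h => hR.shift_injective (congrArg Subtype.val h)

theorem IsCycleTransversal.sigma {ι : Type*} {κ : ι → Type*} {ℓ : ι → ℕ} (hℓ : Injective ℓ)
    {q : ∀ i, κ i → α} (hq : ∀ i, σ.IsCycleTransversal (fun _ => ℓ i) (q i)) :
    σ.IsCycleTransversal (fun x : Σ i, κ i => ℓ x.1) (fun x => q x.1 x.2) where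
  minimalPeriod_eq x := (hq x.1).minimalPeriod_eq x.2
  eq_of_sameCycle {x y} h := by
    obtain ⟨i, s⟩ := x
    obtain ⟨j, t⟩ := y
    obtain rfl : i = j := hℓ <| ((hq i).minimalPeriod_eq s).symm.trans <|
      h.minimalPeriod_eq.trans ((hq j).minimalPeriod_eq t)
    exact congrArg (Sigma.mk i) ((hq i).eq_of_sameCycle h)

theorem prod_le_card_equivariantEmbedding (K : Finset ℕ) (hK : ∀ k ∈ K, 0 < k) (nk : ℕ → ℕ)
    (hσ : ∀ k ∈ K, k * nk k ≤ {x | minimalPeriod σ x = k}.ncard) :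
    ∏ k ∈ K, k ^ nk k * (nk k)! ≤
      Nat.card (σ.EquivariantEmbedding (blockRotation fun x : Σ k : K, Fin (nk k) => (x.1 : ℕ))) :=
  calc ∏ k ∈ K, k ^ nk k * (nk k)! = ∏ k : K, k ^ nk k * (nk k)! := (prod_coe_sort K _).symm
    _ ≤ ∏ k : K, Nat.card {R : Fin (nk k) → α // σ.IsCycleTransversal (fun _ => (k : ℕ)) R} :=
        prod_le_prod' fun k _ => pow_mul_factorial_le_card_isCycleTransversal (hK k k.2) (hσ k k.2)
    _ = Nat.card (∀ k : K, {R : Fin (nk k) → α // σ.IsCycleTransversal (fun _ => (k : ℕ)) R}) :=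
        Nat.card_pi.symm
    _ ≤ Nat.card {p : (Σ k : K, Fin (nk k)) → α // σ.IsCycleTransversal (fun x => (x.1 : ℕ)) p} :=
        Nat.card_le_card_of_injective
          (fun q => ⟨_, IsCycleTransversal.sigma Subtype.val_injective fun k => (q k).2⟩)
          fun q q' h => funext fun k =>
            Subtype.ext (funext fun j => congrFun (congrArg Subtype.val h) ⟨k, j⟩)
    _ ≤ _ := Nat.card_le_card_of_injective (fun p => p.2.embedding) fun p p' h =>
        Subtype.ext <| funext fun x => by
          have hx : 0 < (x.1 : ℕ) := (p.2.minimalPeriod_eq x).symm ▸ σ.minimalPeriod_pos_of_finite _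
          simpa using congrArg (fun ι => ι.1 ⟨x, 0, hx⟩) h

theorem card_sigma_equivariantEmbedding_le {E : Type*} [Finite E] (c : Perm E) :
    Nat.card (Σ σ : Perm α, σ.EquivariantEmbedding c) ≤ (Nat.card α)! := by
  classical
  have := Fintype.ofFinite α
  have := Fintype.ofFinite E
  let restrict : (Σ σ : Perm α, σ.EquivariantEmbedding c) → Σ ι : E ↪ α, Perm ↥(Set.range ι)ᶜ :=
    fun x => ⟨x.2.1, x.1.subtypePerm fun y => not_congr (x.2.apply_mem_range_iff y)⟩
  have hrestrict : Injective restrict := by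
    rintro ⟨σ, ι, hι⟩ ⟨σ', ι', hι'⟩ h
    obtain ⟨rfl, h⟩ := Sigma.mk.inj_iff.mp h
    obtain rfl : σ = σ' := by
      ext x
      by_cases hx : x ∈ Set.range ι
      · obtain ⟨e, rfl⟩ := hx
        rw [hι, hι']
      · exact congrArg Subtype.val (Perm.ext_iff.mp (eq_of_heq h) ⟨x, hx⟩)
    rfl
  have hcompl (ι : E ↪ α) : Nat.card ↥(Set.range ι)ᶜ = Nat.card α - Nat.card E := by
    rw [Nat.card_coe_set_eq, Set.ncard_compl, Set.ncard_range_of_injective ι.injective]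
  calc _ ≤ Nat.card (Σ ι : E ↪ α, Perm ↥(Set.range ι)ᶜ) :=
        Nat.card_le_card_of_injective restrict hrestrict
    _ = (Nat.card α).descFactorial (Nat.card E) * (Nat.card α - Nat.card E)! := by
        rw [Nat.card_sigma]
        simp only [Nat.card_perm, hcompl, sum_const, card_univ, smul_eq_mul]
        simp only [Nat.card_eq_fintype_card, Fintype.card_embedding_eq]
    _ ≤ (Nat.card α)! := by
        rcases le_or_gt (Nat.card E) (Nat.card α) with h | h
        · rw [mul_comm, Nat.factorial_mul_descFactorial h]
        · rw [Nat.descFactorial_eq_zero_iff_lt.mpr h, zero_mul]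
          exact Nat.zero_le _

theorem card_mul_prod_le_factorial (K : Finset ℕ) (hK : ∀ k ∈ K, 0 < k) (nk : ℕ → ℕ) :
    Nat.card {σ : Perm α // ∀ k ∈ K, k * nk k ≤ {x | minimalPeriod σ x = k}.ncard} *
      ∏ k ∈ K, k ^ nk k * (nk k)! ≤ (Nat.card α)! := by
  let S := {σ : Perm α // ∀ k ∈ K, k * nk k ≤ {x | minimalPeriod σ x = k}.ncard}
  let c := blockRotation fun x : Σ k : K, Fin (nk k) => (x.1 : ℕ)
  have := Fintype.ofFinite S
  calc Nat.card S * ∏ k ∈ K, k ^ nk k * (nk k)! = ∑ _σ : S, ∏ k ∈ K, k ^ nk k * (nk k)! := by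
        simp [Nat.card_eq_fintype_card]
    _ ≤ ∑ σ : S, Nat.card (σ.1.EquivariantEmbedding c) :=
        sum_le_sum fun σ _ => prod_le_card_equivariantEmbedding K hK nk σ.2
    _ = Nat.card (Σ σ : S, σ.1.EquivariantEmbedding c) := Nat.card_sigma.symm
    _ ≤ Nat.card (Σ σ : Perm α, σ.EquivariantEmbedding c) :=
        Nat.card_le_card_of_injective (fun x => ⟨x.1.1, x.2⟩) <| by
          rintro ⟨⟨σ, _⟩, ι⟩ ⟨⟨σ', _⟩, ι'⟩ h
          obtain ⟨rfl, h⟩ := Sigma.mk.inj_iff.mp h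
          obtain rfl := eq_of_heq h
          rfl
    _ ≤ (Nat.card α)! := card_sigma_equivariantEmbedding_le c

end Finite

end Equiv.Perm

theorem count_permutations_with_many_short_cycles_general
    (n N : ℕ) (nk : ℕ → ℕ) :
    (Nat.card {σ : Equiv.Perm (Fin n) // ∀ k ∈ Finset.Icc 1 N,
        k * nk k ≤ Set.ncard {v : Fin n | Function.minimalPeriod σ v = k}} : ℝ)
      ≤ (n.factorial : ℝ) /
          ∏ k ∈ Finset.Icc 1 N, ((k : ℝ) ^ nk k * (nk k).factorial) := by
  have hK : ∀ k ∈ Icc 1 N, 0 < k := fun k hk => (mem_Icc.mp hk).1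
  have hprod : 0 < ∏ k ∈ Icc 1 N, ((k : ℝ) ^ nk k * (nk k)!) :=
    prod_pos fun k hk => by have : (0 : ℝ) < k := Nat.cast_pos.mpr (hK k hk); positivity
  have hcount := Perm.card_mul_prod_le_factorial (α := Fin n) (Icc 1 N) hK nk
  rw [Nat.card_fin] at hcount
  rw [le_div_iff₀ hprod]
  exact_mod_cast hcount

/-- The number of permutations of an `n`-element set having at least `n_k` cycles of length
`k` simultaneously for each `1 ≤ k ≤ N` (equivalently, at least `k·n_k` points of minimal
period `k`) is at most `n! / ∏_{k=1}^N k^{n_k} n_k!`. -/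
theorem count_permutations_with_many_short_cycles
    (n N : ℕ) (nk : ℕ → ℕ) (hsum : ∑ k ∈ Finset.Icc 1 N, k * nk k ≤ n) :
    (Nat.card {σ : Equiv.Perm (Fin n) // ∀ k ∈ Finset.Icc 1 N,
        k * nk k ≤ Set.ncard {v : Fin n | Function.minimalPeriod σ v = k}} : ℝ)
      ≤ (n.factorial : ℝ) /
          ∏ k ∈ Finset.Icc 1 N, ((k : ℝ) ^ nk k * (nk k).factorial) :=
  count_permutations_with_many_short_cycles_general n N nk
end

section
/- Let N ≥ 1, let α_k = (k−1)/k for 1 ≤ k ≤ N, and let α_{N+1} ∈ (α_N, 1]. Fix ϱ > 1 and η with 0 < η < (ϱ−1)/4 small enough that α_{N+1}(ϱ−η) > 1. Then there exist δ, δ₀ > 0 such that: for all reals T > 0 and nonnegative reals n₁,…,n_N with n₁ ≤ δT and Σ_{k=1}^N k n_k ≤ T, and all nonnegative reals x₀,…,x_{N+1} satisfying (a) Σ_{k=0}^{N+1} x_k ≥ (ϱ−η)T and (b) Σ_{k=1}^m x_k ≤ (ϱ+η) Σ_{k=1}^m k n_k for every 1 ≤ m ≤ N, one has Σ_{k=1}^N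 n_k − T + x₀ + Σ_{k=1}^{N+1} α_k x_k ≥ δ₀ T. -/
/-!
Put `γ_k = α_{N+1} - α_k`, which is nonnegative and decreasing on `1 ≤ k ≤ N`. Abel summation
against the partial-sum constraints gives `Σ γ_k x_k ≤ (ϱ+η) Σ γ_k k n_k`, where
`γ_k k = k α_{N+1} - k + 1`. Together with `Σ x_k ≥ (ϱ-η)T` and `α_{N+1} ≤ 1`, this bounds the
objective below by `(α_{N+1}(ϱ-η) - 1) T + Σ_k (1 - (ϱ+η)(k α_{N+1} - k + 1)) n_k`. The coefficient
of `n_1` is at least `-(ϱ+η)`, which is harmless since `n_1 ≤ δT`. For `k ≥ 2` the coefficient is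
at least `c k` with `c = (1-(ϱ+η))/2 + (ϱ+η)(1-α_{N+1})`, so these terms contribute at least
`min c 0 · T`, and `α_{N+1}(ϱ-η) - 1 + min c 0 > 0`.
-/
open Finset

section PartialSummation

variable {R : Type*} [Ring R] [PartialOrder R] [IsOrderedRing R] {γ d x y : ℕ → R} {m : ℕ}

theorem AntitoneOn.mul_sum_Icc_le_sum_Icc_mul (hγ : AntitoneOn γ (Icc 1 m))
    (hd : ∀ j ∈ Icc 1 m, 0 ≤ ∑ k ∈ Icc 1 j, d k) :
    γ m * ∑ k ∈ Icc 1 m, d k ≤ ∑ k ∈ Icc 1 m, γ k * d k := by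
  induction m with
  | zero => simp
  | succ m ih =>
    have hsub : Icc 1 m ⊆ Icc 1 (m + 1) := Icc_subset_Icc_right m.le_succ
    have hstep : γ (m + 1) * ∑ k ∈ Icc 1 m, d k ≤ γ m * ∑ k ∈ Icc 1 m, d k := by
      rcases Nat.eq_zero_or_pos m with rfl | hm
      · simp
      · refine mul_le_mul_of_nonneg_right (hγ ?_ ?_ m.le_succ) (hd m (hsub ?_)) <;>
          simp only [coe_Icc, Set.mem_Icc, mem_Icc] <;> omega
    rw [sum_Icc_succ_top (by omega), sum_Icc_succ_top (by omega), mul_add]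
    grw [hstep, ih (hγ.mono (coe_subset.2 hsub)) fun j hj => hd j (hsub hj)]

theorem AntitoneOn.sum_Icc_mul_le_sum_Icc_mul (hγ : AntitoneOn γ (Icc 1 m)) (hγm : 0 ≤ γ m)
    (h : ∀ j ∈ Icc 1 m, ∑ k ∈ Icc 1 j, x k ≤ ∑ k ∈ Icc 1 j, y k) :
    ∑ k ∈ Icc 1 m, γ k * x k ≤ ∑ k ∈ Icc 1 m, γ k * y k := by
  have hd : ∀ j ∈ Icc 1 m, 0 ≤ ∑ k ∈ Icc 1 j, (y k - x k) := fun j hj => by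
    simpa only [sum_sub_distrib, sub_nonneg] using h j hj
  rcases Nat.eq_zero_or_pos m with rfl | hm
  · simp
  have key := hγ.mul_sum_Icc_le_sum_Icc_mul hd
  rw [← sub_nonneg, ← sum_sub_distrib]
  simp only [← mul_sub]
  exact (mul_nonneg hγm (hd m (right_mem_Icc.2 hm))).trans key

end PartialSummation

theorem sum_range_add_two {M : Type*} [AddCommMonoid M] (f : ℕ → M) (N : ℕ) :
    ∑ k ∈ range (N + 2), f k = f 0 + ∑ k ∈ Icc 1 N, f k + f (N + 1) := by
  induction N with
  | zero => simp [sum_range_succ]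
  | succ N ih =>
    rw [sum_range_succ, ih, sum_Icc_succ_top (by omega)]
    abel

theorem sub_one_div_le_sub_one_div {K : Type*} [Field K] [LinearOrder K] [IsStrictOrderedRing K]
    {a b : K} (ha : 0 < a) (hab : a ≤ b) : (a - 1) / a ≤ (b - 1) / b := by
  rw [sub_div, sub_div, div_self ha.ne', div_self (ha.trans_le hab).ne']
  gcongr

section Minimization

variable {N : ℕ} {a P T : ℝ} {n x : ℕ → ℝ}

theorem antitoneOn_sub_sub_one_div : AntitoneOn (fun k : ℕ => a - ((k : ℝ) - 1) / k) (Icc 1 N) :=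
  fun k hk l _ hkl => by
    have hk : (0 : ℝ) < k := by simp only [coe_Icc, Set.mem_Icc] at hk; exact_mod_cast hk.1
    have hkl : (k : ℝ) ≤ l := by exact_mod_cast hkl
    exact sub_le_sub_left (sub_one_div_le_sub_one_div hk hkl) a

theorem sub_mul_le_sum_sub_one_div_mul {Q : ℝ} (hN : 1 ≤ N) (ha : ((N : ℝ) - 1) / N ≤ a)
    (ha1 : a ≤ 1) (hx0 : 0 ≤ x 0) (htot : Q * T ≤ ∑ k ∈ range (N + 2), x k)
    (hpart : ∀ m ∈ Icc 1 N, ∑ k ∈ Icc 1 m, x k ≤ P * ∑ k ∈ Icc 1 m, (k : ℝ) * n k) :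
    a * Q * T - P * ∑ k ∈ Icc 1 N, ((k : ℝ) * a - k + 1) * n k ≤
      x 0 + ∑ k ∈ Icc 1 N, ((k : ℝ) - 1) / k * x k + a * x (N + 1) := by
  have ha0 : 0 ≤ a := (div_nonneg (by simpa using hN) (Nat.cast_nonneg N)).trans ha
  have habel := antitoneOn_sub_sub_one_div.sum_Icc_mul_le_sum_Icc_mul (sub_nonneg.2 ha)
    (y := fun k => P * ((k : ℝ) * n k)) fun m hm => by simpa only [mul_sum] using hpart m hm
  have hy : ∑ k ∈ Icc 1 N, (a - ((k : ℝ) - 1) / k) * (P * (k * n k))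
      = P * ∑ k ∈ Icc 1 N, ((k : ℝ) * a - k + 1) * n k := by
    rw [mul_sum]
    refine sum_congr rfl fun k hk => ?_
    have hk : (k : ℝ) ≠ 0 := by simp only [mem_Icc] at hk; exact_mod_cast (by omega : k ≠ 0)
    field_simp
    ring
  have hx : ∑ k ∈ Icc 1 N, ((k : ℝ) - 1) / k * x k
      = a * ∑ k ∈ Icc 1 N, x k - ∑ k ∈ Icc 1 N, (a - ((k : ℝ) - 1) / k) * x k := by
    rw [mul_sum, ← sum_sub_distrib]
    exact sum_congr rfl fun k _ => by ring
  rw [sum_range_add_two] at htot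
  rw [hy] at habel
  rw [hx]
  nlinarith [mul_le_mul_of_nonneg_left htot ha0, mul_nonneg (sub_nonneg.2 ha1) hx0]

theorem mul_le_one_sub_mul_of_two_le {k : ℝ} (hP : 1 ≤ P) (hk : 2 ≤ k) :
    ((1 - P) / 2 + P * (1 - a)) * k ≤ 1 - P * (k * a - k + 1) := by
  nlinarith [mul_nonneg (sub_nonneg.2 hP) (sub_nonneg.2 hk)]

theorem neg_mul_add_min_mul_le (hN : 1 ≤ N) (hP : 1 ≤ P) (ha1 : a ≤ 1) (hn : ∀ k, 0 ≤ n k)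
    (hT : ∑ k ∈ Icc 1 N, (k : ℝ) * n k ≤ T) :
    -P * n 1 + min ((1 - P) / 2 + P * (1 - a)) 0 * T ≤
      ∑ k ∈ Icc 1 N, n k - P * ∑ k ∈ Icc 1 N, ((k : ℝ) * a - k + 1) * n k := by
  set c := min ((1 - P) / 2 + P * (1 - a)) 0
  have h1 : 1 ∈ Icc 1 N := mem_Icc.2 ⟨le_rfl, hN⟩
  have hhead : -P * n 1 ≤ (1 - P * a) * n 1 :=
    mul_le_mul_of_nonneg_right (by nlinarith) (hn 1)
  have htail : c * T ≤ ∑ k ∈ Ioc 1 N, (1 - P * (k * a - k + 1)) * n k := by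
    have hT' : ∑ k ∈ Ioc 1 N, (k : ℝ) * n k ≤ T :=
      (sum_le_sum_of_subset_of_nonneg Ioc_subset_Icc_self fun k _ _ =>
        mul_nonneg k.cast_nonneg (hn k)).trans hT
    calc c * T ≤ c * ∑ k ∈ Ioc 1 N, (k : ℝ) * n k :=
          mul_le_mul_of_nonpos_left hT' (min_le_right _ _)
      _ = ∑ k ∈ Ioc 1 N, c * k * n k := by rw [mul_sum]; simp only [mul_assoc]
      _ ≤ ∑ k ∈ Ioc 1 N, (1 - P * (k * a - k + 1)) * n k := by
        refine sum_le_sum fun k hk => mul_le_mul_of_nonneg_right ?_ (hn k)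
        have hk : (2 : ℝ) ≤ k := by simp only [mem_Ioc] at hk; exact_mod_cast hk.1
        exact (mul_le_mul_of_nonneg_right (min_le_left _ _) (by linarith)).trans
          (mul_le_one_sub_mul_of_two_le hP hk)
  have hsum : ∑ k ∈ Icc 1 N, n k - P * ∑ k ∈ Icc 1 N, ((k : ℝ) * a - k + 1) * n k
      = (1 - P * a) * n 1 + ∑ k ∈ Ioc 1 N, (1 - P * (k * a - k + 1)) * n k := by
    rw [mul_sum, ← sum_sub_distrib, ← add_sum_erase _ _ h1, Icc_erase_left]
    congr 1
    · push_cast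
      ring
    · exact sum_congr rfl fun k _ => by ring
  linarith

theorem margin_pos {ϱ η : ℝ} (ha1 : a ≤ 1) (hη0 : 0 ≤ η) (hη1 : η < (ϱ - 1) / 4)
    (hbig : 1 < a * (ϱ - η)) :
    0 < a * (ϱ - η) - 1 + min ((1 - (ϱ + η)) / 2 + (ϱ + η) * (1 - a)) 0 := by
  rcases min_cases ((1 - (ϱ + η)) / 2 + (ϱ + η) * (1 - a)) 0 with ⟨h, _⟩ | ⟨h, _⟩ <;> rw [h]
  · -- the left side is now `(ϱ - 1 + η - 4 a η) / 2`
    nlinarith [mul_le_of_le_one_left hη0 ha1]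
  · linarith

end Minimization

theorem minimization_lemma_general
    (N : ℕ) (hN : 1 ≤ N) (αN1 ϱ η : ℝ)
    (hα1 : ((N : ℝ) - 1) / N < αN1) (hα2 : αN1 ≤ 1)
    (hη0 : 0 < η) (hη1 : η < (ϱ - 1) / 4)
    (hbig : 1 < αN1 * (ϱ - η)) :
    ∃ δ > (0 : ℝ), ∃ δ₀ > (0 : ℝ),
      ∀ T : ℝ, 0 < T →
      ∀ n : ℕ → ℝ, (∀ k, 0 ≤ n k) →
        n 1 ≤ δ * T →
        (∑ k ∈ Finset.Icc 1 N, (k : ℝ) * n k) ≤ T →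
      ∀ x : ℕ → ℝ, (∀ k, 0 ≤ x k) →
        (ϱ - η) * T ≤ ∑ k ∈ Finset.range (N + 2), x k →
        (∀ m ∈ Finset.Icc 1 N,
          ∑ k ∈ Finset.Icc 1 m, x k ≤ (ϱ + η) * ∑ k ∈ Finset.Icc 1 m, (k : ℝ) * n k) →
        δ₀ * T ≤ (∑ k ∈ Finset.Icc 1 N, n k) - T + x 0
          + (∑ k ∈ Finset.Icc 1 N, ((k : ℝ) - 1) / (k : ℝ) * x k) + αN1 * x (N + 1) := by
  have hP : 1 ≤ ϱ + η := by linarith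
  have hμ := margin_pos hα2 hη0.le hη1 hbig
  set μ := αN1 * (ϱ - η) - 1 + min ((1 - (ϱ + η)) / 2 + (ϱ + η) * (1 - αN1)) 0
  refine ⟨μ / (2 * (ϱ + η)), by positivity, μ / 2, by positivity, ?_⟩
  intro T _ n hn hn1 hnT x hx hxtot hxpart
  have hx_bound := sub_mul_le_sum_sub_one_div_mul hN hα1.le hα2 (hx 0) hxtot hxpart
  have hn_bound := neg_mul_add_min_mul_le hN hP hα2 hn hnT
  have hn1' : (ϱ + η) * n 1 ≤ μ / 2 * T := by
    calc (ϱ + η) * n 1 ≤ (ϱ + η) * (μ / (2 * (ϱ + η)) * T) := by gcongr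
      _ = μ / 2 * T := by field_simp
  linear_combination hx_bound + hn_bound + hn1'

/-- Key algebraic minimization lemma. With `α_k = (k−1)/k` for `1 ≤ k ≤ N` and
`α_{N+1} ∈ (α_N, 1]`, `ϱ > 1`, `0 < η < (ϱ−1)/4` with `α_{N+1}(ϱ−η) > 1`, there exist
`δ, δ₀ > 0` such that for all `T > 0`, nonnegative `n₁,…,n_N` with `n₁ ≤ δT` and
`Σ k n_k ≤ T`, and all nonnegative `x₀,…,x_{N+1}` with `Σ x_k ≥ (ϱ−η)T` and partial-sum
constraints `Σ_{k≤m} x_k ≤ (ϱ+η) Σ_{k≤m} k n_k` (1 ≤ m ≤ N), one has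
`Σ n_k − T + x₀ + Σ α_k x_k ≥ δ₀ T`. -/
theorem minimization_lemma
    (N : ℕ) (hN : 1 ≤ N) (αN1 ϱ η : ℝ)
    (hα1 : ((N : ℝ) - 1) / N < αN1) (hα2 : αN1 ≤ 1)
    (hϱ : 1 < ϱ) (hη0 : 0 < η) (hη1 : η < (ϱ - 1) / 4)
    (hbig : 1 < αN1 * (ϱ - η)) :
    ∃ δ > (0 : ℝ), ∃ δ₀ > (0 : ℝ),
      ∀ T : ℝ, 0 < T →
      ∀ n : ℕ → ℝ, (∀ k, 0 ≤ n k) →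
        n 1 ≤ δ * T →
        (∑ k ∈ Finset.Icc 1 N, (k : ℝ) * n k) ≤ T →
      ∀ x : ℕ → ℝ, (∀ k, 0 ≤ x k) →
        (ϱ - η) * T ≤ ∑ k ∈ Finset.range (N + 2), x k →
        (∀ m ∈ Finset.Icc 1 N,
          ∑ k ∈ Finset.Icc 1 m, x k ≤ (ϱ + η) * ∑ k ∈ Finset.Icc 1 m, (k : ℝ) * n k) →
        δ₀ * T ≤ (∑ k ∈ Finset.Icc 1 N, n k) - T + x 0
          + (∑ k ∈ Finset.Icc 1 N, ((k : ℝ) - 1) / (k : ℝ) * x k) + αN1 * x (N + 1) :=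
  minimization_lemma_general N hN αN1 ϱ η hα1 hα2 hη0 hη1 hbig
end

section
/- Let G = (V, E) be an Erdős–Rényi random graph on n vertices with edge probability λ/n, where λ > 0 is fixed, and let ζ > 1. Then the probability that there exists a nonempty subset A ⊂ V with |A| ≤ n/log n and |E(A)| > ζ|A| tends to 0 as n → ∞, where E(A) is the set of edges with both endpoints in A. More precisely, this probability is at most Σ_{k ≤ n/log n} C(n,k) · P[Bin(C(k,2), λ/n) > ζk]. -/
open Finset
open scoped Classical

/-- Probability weight of an edge-configuration `ω` of the Erdős–Rényi graph `G(n, lam/n)`: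
each unordered pair is present independently with probability `lam/n`. -/
noncomputable def erWeight (n : ℕ) (lam : ℝ) (ω : Sym2 (Fin n) → Bool) : ℝ :=
  ∏ e : Sym2 (Fin n), (if ω e then lam / n else 1 - lam / n)

/-- Number of edges of the configuration `ω` with both endpoints in `A`. -/
noncomputable def edgesIn (n : ℕ) (ω : Sym2 (Fin n) → Bool) (A : Finset (Fin n)) : ℕ :=
  (Finset.univ.filter fun e : Sym2 (Fin n) =>
    ¬e.IsDiag ∧ (∀ v ∈ e, v ∈ A) ∧ ω e = true).card

/-- Probability that some nonempty `A` with `|A| ≤ n / log n` has `|E(A)| > ζ|A|`. -/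
noncomputable def badProb (lam ζ : ℝ) (n : ℕ) : ℝ :=
  ∑ ω : Sym2 (Fin n) → Bool, erWeight n lam ω *
    (if ∃ A : Finset (Fin n), A.Nonempty ∧ (A.card : ℝ) ≤ (n : ℝ) / Real.log n ∧
        ζ * (A.card : ℝ) < (edgesIn n ω A : ℝ) then 1 else 0)

/-- The binomial tail `P[Bin(m, q) > t]`. -/
noncomputable def binomTailGT (m : ℕ) (q t : ℝ) : ℝ :=
  ∑ i ∈ Finset.range (m + 1),
    if t < (i : ℝ) then (m.choose i : ℝ) * q ^ i * (1 - q) ^ (m - i) else 0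

/-!
Union bound over the sets `A`. For `|A| = k`, `|E(A)|` is binomial with `m = C(k,2) ≤ k²/2`
trials and success probability `q = λ/n`, and `P[Bin(m,q) ≥ s] ≤ C(m,s) q^s ≤ (3mq/s)^s`
(from `s^s ≤ 3^s s!`). With `s = ⌊ζk⌋ + 1`, `C(n,k) ≤ (3n/k)^k` and `k ≤ n / log n`, the `k`-th
term of the union bound is at most `r_n^k` where `r_n = 3 (3λ/2ζ)^ζ / (log n)^(ζ-1)`, so the
whole sum is at most `r_n / (1 - r_n)`, which tends to `0` because `ζ > 1`.
-/

open Filter Topology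

noncomputable def bernoulliWeight (q : ℝ) (b : Bool) : ℝ := if b then q else 1 - q

section
variable {ι : Type*} [Fintype ι] [DecidableEq ι]

lemma sum_prod_bernoulliWeight_of_filter_eq (q : ℝ) {S T : Finset ι} (hTS : T ⊆ S) :
    ∑ ω ∈ univ.filter (fun ω : ι → Bool => S.filter (ω · = true) = T),
        ∏ e, bernoulliWeight q (ω e)
      = q ^ #T * (1 - q) ^ (#S - #T) := by
  have hfiber : univ.filter (fun ω : ι → Bool => S.filter (ω · = true) = T) =
      Fintype.piFinset fun e => if e ∈ S then {decide (e ∈ T)} else univ := by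
    ext ω
    simp only [mem_filter, mem_univ, true_and, Fintype.mem_piFinset, Finset.ext_iff]
    refine forall_congr' fun e => ?_
    have := @hTS e
    by_cases heS : e ∈ S <;> by_cases heT : e ∈ T <;> simp_all
  have hfactor : ∀ e, ∑ b ∈ (if e ∈ S then {decide (e ∈ T)} else univ), bernoulliWeight q b
      = (if e ∈ T then q else 1) * (if e ∈ S \ T then 1 - q else 1) := fun e => by
    have := @hTS e
    by_cases heS : e ∈ S <;> by_cases heT : e ∈ T <;> simp_all [bernoulliWeight]
  rw [hfiber, ← prod_univ_sum, prod_congr rfl fun e _ => hfactor e, prod_mul_distrib,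
    prod_ite_mem, prod_ite_mem, univ_inter, univ_inter, prod_const, prod_const,
    card_sdiff_of_subset hTS]

lemma sum_prod_bernoulliWeight_mul_card_filter (q : ℝ) (S : Finset ι) (F : ℕ → ℝ) :
    ∑ ω : ι → Bool, (∏ e, bernoulliWeight q (ω e)) * F #(S.filter (ω · = true))
      = ∑ i ∈ range (#S + 1), ((#S).choose i : ℝ) * q ^ i * (1 - q) ^ (#S - i) * F i := by
  rw [← sum_fiberwise_of_maps_to (g := fun ω => S.filter (ω · = true)) (t := S.powerset)
    fun ω _ => mem_powerset.2 (filter_subset _ _)]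
  calc _ = ∑ T ∈ S.powerset, q ^ #T * (1 - q) ^ (#S - #T) * F #T := by
        refine sum_congr rfl fun T hT => ?_
        rw [← sum_prod_bernoulliWeight_of_filter_eq q (mem_powerset.1 hT), sum_mul]
        exact sum_congr rfl fun ω hω => by rw [(mem_filter.1 hω).2]
    _ = _ := by
        rw [sum_powerset_apply_card fun i => q ^ i * (1 - q) ^ (#S - i) * F i]
        simp only [nsmul_eq_mul, mul_assoc]
end

-- The decidability instance is a parameter: on `Fin n` the bounded `∀` is decided by
-- `Nat.decidableForallFin`, not by the instance found for a general `α`.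
lemma Sym2.card_filter_not_isDiag_forall_mem {α : Type*} [Fintype α] [DecidableEq α] (A : Finset α)
    [DecidablePred fun e : Sym2 α => ¬e.IsDiag ∧ ∀ v ∈ e, v ∈ A] :
    #(univ.filter fun e : Sym2 α => ¬e.IsDiag ∧ ∀ v ∈ e, v ∈ A) = (#A).choose 2 := by
  rw [← Sym2.card_image_offDiag]
  congr 1
  ext e
  induction e using Sym2.ind
  aesop

lemma erWeight_eq_prod_bernoulliWeight (n : ℕ) (lam : ℝ) (ω : Sym2 (Fin n) → Bool) :
    erWeight n lam ω = ∏ e, bernoulliWeight (lam / n) (ω e) := rfl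

lemma sum_erWeight_mul_edgesIn_gt {n : ℕ} (lam t : ℝ) (A : Finset (Fin n)) :
    ∑ ω, erWeight n lam ω * (if t < (edgesIn n ω A : ℝ) then 1 else 0)
      = binomTailGT ((#A).choose 2) (lam / n) t := by
  set S := univ.filter fun e : Sym2 (Fin n) => ¬e.IsDiag ∧ ∀ v ∈ e, v ∈ A
  have hedges : ∀ ω, edgesIn n ω A = #(S.filter (ω · = true)) := fun ω => by
    rw [edgesIn, filter_filter]
    exact congrArg card (filter_congr fun e _ => and_assoc.symm)
  simp only [erWeight_eq_prod_bernoulliWeight, hedges]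
  have hS : #S = (#A).choose 2 := Sym2.card_filter_not_isDiag_forall_mem A
  rw [sum_prod_bernoulliWeight_mul_card_filter (lam / n) S fun i => if t < (i : ℝ) then 1 else 0,
    hS, binomTailGT]
  simp only [mul_ite, mul_one, mul_zero]

lemma Finset.sum_mul_ite_exists_le {α β : Type*} (s : Finset α) (𝒜 : Finset β) {w : α → ℝ}
    (hw : ∀ a ∈ s, 0 ≤ w a) (P : β → α → Prop) :
    ∑ a ∈ s, w a * (if ∃ B ∈ 𝒜, P B a then 1 else 0)
      ≤ ∑ B ∈ 𝒜, ∑ a ∈ s, w a * (if P B a then 1 else 0) := by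
  rw [sum_comm]
  refine sum_le_sum fun a ha => ?_
  rw [← mul_sum]
  refine mul_le_mul_of_nonneg_left ?_ (hw a ha)
  have hnonneg : ∀ B ∈ 𝒜, (0 : ℝ) ≤ if P B a then 1 else 0 := fun B _ => by positivity
  split_ifs with h
  · obtain ⟨B, hB, hPB⟩ := h
    simpa [hPB] using single_le_sum hnonneg hB
  · exact sum_nonneg hnonneg

lemma Fintype.sum_finset_apply_card {α M : Type*} [Fintype α] [AddCommMonoid M] (f : ℕ → M) :
    ∑ A : Finset α, f #A = ∑ k ∈ range (Fintype.card α + 1), (Fintype.card α).choose k • f k := by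
  rw [← powerset_univ, sum_powerset_apply_card, card_univ]

lemma erWeight_nonneg {n : ℕ} {lam : ℝ} (hlam : 0 ≤ lam) (hn : lam ≤ n) (ω : Sym2 (Fin n) → Bool) :
    0 ≤ erWeight n lam ω := by
  have hq1 : lam / n ≤ 1 := div_le_one_of_le₀ hn n.cast_nonneg
  refine prod_nonneg fun e _ => ?_
  split_ifs
  · positivity
  · linarith

lemma badProb_nonneg {lam ζ : ℝ} {n : ℕ} (hlam : 0 ≤ lam) (hn : lam ≤ n) :
    0 ≤ badProb lam ζ n :=
  sum_nonneg fun ω _ => mul_nonneg (erWeight_nonneg hlam hn ω) (by positivity)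

lemma badProb_le_sum_choose_mul_binomTailGT {lam ζ : ℝ} {n : ℕ} (hlam : 0 ≤ lam)
    (hn : lam ≤ n) :
    badProb lam ζ n ≤
      ∑ k ∈ Icc 1 n, if (k : ℝ) ≤ n / Real.log n then
        (n.choose k : ℝ) * binomTailGT (k.choose 2) (lam / n) (ζ * k) else 0 := by
  let small : Finset (Fin n) → Prop := fun A => 0 < #A ∧ (#A : ℝ) ≤ n / Real.log n
  calc badProb lam ζ n
      ≤ ∑ A ∈ univ.filter small, ∑ ω, erWeight n lam ω *
          (if ζ * #A < (edgesIn n ω A : ℝ) then 1 else 0) := by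
        refine le_of_eq_of_le ?_
          (Finset.sum_mul_ite_exists_le _ _ (fun ω _ => erWeight_nonneg hlam hn ω) _)
        simp only [badProb, mem_filter, mem_univ, true_and, small, card_pos, and_assoc]
    _ = ∑ A : Finset (Fin n), if small A then
          binomTailGT ((#A).choose 2) (lam / n) (ζ * #A) else 0 := by
        simp only [sum_erWeight_mul_edgesIn_gt, sum_filter]
    _ = ∑ k ∈ range (n + 1), n.choose k • if 0 < k ∧ (k : ℝ) ≤ n / Real.log n then
          binomTailGT (k.choose 2) (lam / n) (ζ * k) else 0 := by
        rw [Fintype.sum_finset_apply_card fun k => if 0 < k ∧ (k : ℝ) ≤ n / Real.log n then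
          binomTailGT (k.choose 2) (lam / n) (ζ * k) else 0, Fintype.card_fin]
    _ = _ := by
        have hIcc : Icc 1 n = (range (n + 1)).filter (0 < ·) := by
          ext k
          simp only [mem_Icc, mem_filter, mem_range]
          omega
        rw [hIcc, sum_filter]
        refine sum_congr rfl fun k _ => ?_
        split_ifs <;> simp_all

lemma Nat.choose_add_le_choose_mul_choose (m s j : ℕ) :
    m.choose (s + j) ≤ m.choose s * (m - s).choose j := by
  have h := Nat.choose_mul (n := m) (Nat.le_add_right s j)
  rw [Nat.add_sub_cancel_left] at h
  exact h ▸ Nat.le_mul_of_pos_right _ (Nat.choose_pos (Nat.le_add_right s j))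

lemma sum_Ico_choose_mul_pow_le {q : ℝ} (hq0 : 0 ≤ q) (hq1 : q ≤ 1) (m s : ℕ) :
    ∑ i ∈ Ico s (m + 1), (m.choose i : ℝ) * q ^ i * (1 - q) ^ (m - i) ≤ m.choose s * q ^ s := by
  have hterm : ∀ j, (m.choose (s + j) : ℝ) * q ^ (s + j) * (1 - q) ^ (m - (s + j))
      ≤ m.choose s * q ^ s * ((m - s).choose j * q ^ j * (1 - q) ^ (m - s - j)) := fun j => by
    have hc : (m.choose (s + j) : ℝ) ≤ m.choose s * (m - s).choose j := by
      exact_mod_cast Nat.choose_add_le_choose_mul_choose m s j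
    have h1q : 0 ≤ 1 - q := by linarith
    rw [pow_add, ← Nat.sub_sub]
    calc _ = (m.choose (s + j) : ℝ) * (q ^ s * q ^ j * (1 - q) ^ (m - s - j)) := by ring
      _ ≤ (m.choose s * (m - s).choose j) * (q ^ s * q ^ j * (1 - q) ^ (m - s - j)) := by gcongr
      _ = _ := by ring
  have hbinom : ∑ j ∈ range (m - s + 1), ((m - s).choose j : ℝ) * q ^ j * (1 - q) ^ (m - s - j)
      = 1 := by
    calc _ = (q + (1 - q)) ^ (m - s) := by
          rw [add_pow]
          exact sum_congr rfl fun j _ => by ring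
      _ = 1 := by rw [add_sub_cancel, one_pow]
  rw [sum_Ico_eq_sum_range]
  calc _ ≤ ∑ j ∈ range (m + 1 - s),
        m.choose s * q ^ s * ((m - s).choose j * q ^ j * (1 - q) ^ (m - s - j)) :=
        sum_le_sum fun j _ => hterm j
    _ ≤ ∑ j ∈ range (m - s + 1),
        m.choose s * q ^ s * ((m - s).choose j * q ^ j * (1 - q) ^ (m - s - j)) := by
        refine sum_le_sum_of_subset_of_nonneg (range_subset_range.2 (by omega)) fun j _ _ => ?_
        have h1q : 0 ≤ 1 - q := by linarith
        positivity
    _ = m.choose s * q ^ s := by rw [← mul_sum, hbinom, mul_one]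

lemma binomTailGT_le_choose_mul_pow {q t : ℝ} (hq0 : 0 ≤ q) (hq1 : q ≤ 1) (ht : 0 ≤ t) (m : ℕ) :
    binomTailGT m q t ≤ m.choose (⌊t⌋₊ + 1) * q ^ (⌊t⌋₊ + 1) := by
  have hfilter : (range (m + 1)).filter (fun i : ℕ => t < i) = Ico (⌊t⌋₊ + 1) (m + 1) := by
    ext i
    simp only [mem_filter, mem_range, mem_Ico, ← Nat.floor_lt ht]
    omega
  rw [binomTailGT, ← sum_filter, hfilter]
  exact sum_Ico_choose_mul_pow_le hq0 hq1 m _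

lemma Nat.choose_le_three_mul_div_pow (m s : ℕ) : (m.choose s : ℝ) ≤ (3 * m / s) ^ s := by
  rcases s.eq_zero_or_pos with rfl | hs
  · simp
  have hexp : Real.exp s ≤ 3 ^ s := by
    rw [← Real.exp_one_pow]
    exact pow_le_pow_left₀ (Real.exp_pos 1).le (Real.exp_one_lt_d9.le.trans (by norm_num)) s
  have hfact : (s : ℝ) ^ s ≤ 3 ^ s * s.factorial := by
    have h := Real.pow_div_factorial_le_exp (x := s) (Nat.cast_nonneg s) s
    rw [div_le_iff₀ (by positivity)] at h
    nlinarith [Nat.factorial_pos s]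
  calc (m.choose s : ℝ) ≤ m ^ s / s.factorial := Nat.choose_le_pow_div s m
    _ ≤ (3 * m / s) ^ s := by
        rw [div_pow, mul_pow, div_le_div_iff₀ (by positivity) (by positivity)]
        calc (m : ℝ) ^ s * s ^ s ≤ m ^ s * (3 ^ s * s.factorial) := by gcongr
          _ = _ := by ring

lemma binomTailGT_nonneg {q : ℝ} (hq0 : 0 ≤ q) (hq1 : q ≤ 1) (m : ℕ) (t : ℝ) :
    0 ≤ binomTailGT m q t := by
  have h1q : 0 ≤ 1 - q := by linarith
  exact sum_nonneg fun i _ => by positivity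

lemma binomTailGT_le_rpow {m : ℕ} {q t b : ℝ} (hq0 : 0 ≤ q) (hq1 : q ≤ 1) (ht : 0 ≤ t)
    (hb0 : 0 < b) (hb1 : b ≤ 1) (hmq : 3 * m * q ≤ b * t) : binomTailGT m q t ≤ b ^ t := by
  set s := ⌊t⌋₊ + 1
  have hts : t ≤ s := by
    simp only [s, Nat.cast_add, Nat.cast_one]
    exact (Nat.lt_floor_add_one t).le
  have hs : (0 : ℝ) < s := by positivity
  calc binomTailGT m q t ≤ m.choose s * q ^ s := binomTailGT_le_choose_mul_pow hq0 hq1 ht m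
    _ ≤ (3 * m / s) ^ s * q ^ s := by gcongr; exact Nat.choose_le_three_mul_div_pow m s
    _ = (3 * m * q / s) ^ s := by rw [← mul_pow]; ring
    _ ≤ b ^ s := by
        gcongr
        rw [div_le_iff₀ hs]
        calc 3 * m * q ≤ b * t := hmq
          _ ≤ b * s := by gcongr
    _ = b ^ (s : ℝ) := (Real.rpow_natCast b s).symm
    _ ≤ b ^ t := Real.rpow_le_rpow_of_exponent_ge hb0 hb1 hts

lemma binomTailGT_choose_two_le_rpow {lam ζ : ℝ} {n k : ℕ} (hlam : 0 < lam) (hζ : 0 < ζ)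
    (hn : lam ≤ n) (hk : 0 < k) (hb : 3 * lam / (2 * ζ) * (k / n) ≤ 1) :
    binomTailGT (k.choose 2) (lam / n) (ζ * k) ≤ (3 * lam / (2 * ζ) * (k / n)) ^ (ζ * k) := by
  have hn0 : (0 : ℝ) < n := hlam.trans_le hn
  have hmq : 3 * (k.choose 2 : ℕ) * (lam / n) ≤ 3 * lam / (2 * ζ) * (k / n) * (ζ * k) := by
    have hm : ((k.choose 2 : ℕ) : ℝ) ≤ k * k / 2 := by
      rw [Nat.cast_choose_two]
      linarith [Nat.cast_nonneg (α := ℝ) k]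
    calc _ ≤ 3 * (k * k / 2) * (lam / n) := by gcongr
      _ = _ := by field_simp
  exact binomTailGT_le_rpow (by positivity) (div_le_one_of_le₀ hn hn0.le) (by positivity)
    (by positivity) hb hmq

lemma choose_mul_binomTailGT_le {lam ζ : ℝ} {n k : ℕ} (hlam : 0 < lam) (hζ : 1 ≤ ζ)
    (hn : lam ≤ n) (hlog : 3 * lam / (2 * ζ) ≤ Real.log n) (hk : 0 < k)
    (hkn : (k : ℝ) ≤ n / Real.log n) :
    (n.choose k : ℝ) * binomTailGT (k.choose 2) (lam / n) (ζ * k)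
      ≤ (3 * (3 * lam / (2 * ζ)) ^ ζ / Real.log n ^ (ζ - 1)) ^ k := by
  set c := 3 * lam / (2 * ζ)
  have hc : 0 < c := by positivity
  have hL : 0 < Real.log n := hc.trans_le hlog
  have hn0 : (0 : ℝ) < n := hlam.trans_le hn
  have hk0 : (0 : ℝ) < k := by exact_mod_cast hk
  have hkn' : (k : ℝ) / n ≤ 1 / Real.log n := by
    rw [div_le_div_iff₀ hn0 hL, one_mul]
    rwa [le_div_iff₀ hL] at hkn
  have hb : c * (k / n) ≤ 1 := calc
    c * (k / n) ≤ c * (1 / Real.log n) := mul_le_mul_of_nonneg_left hkn' hc.le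
    _ ≤ 1 := by rwa [mul_one_div, div_le_one hL]
  have hratio : 3 * n / k * (c * (k / n)) ^ ζ = 3 * c ^ ζ * (k / n) ^ (ζ - 1) := by
    rw [Real.mul_rpow hc.le (by positivity), Real.rpow_sub_one (by positivity)]
    field_simp
  have hq1 : lam / n ≤ 1 := div_le_one_of_le₀ hn hn0.le
  calc (n.choose k : ℝ) * binomTailGT (k.choose 2) (lam / n) (ζ * k)
      ≤ (3 * n / k) ^ k * ((c * (k / n)) ^ ζ) ^ k := by
        rw [← Real.rpow_natCast ((c * (k / n)) ^ ζ), ← Real.rpow_mul (by positivity)]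
        exact mul_le_mul (Nat.choose_le_three_mul_div_pow n k)
          (binomTailGT_choose_two_le_rpow hlam (by positivity) hn hk hb)
          (binomTailGT_nonneg (by positivity) hq1 _ _) (by positivity)
    _ = (3 * c ^ ζ * (k / n) ^ (ζ - 1)) ^ k := by rw [← mul_pow, hratio]
    _ ≤ (3 * c ^ ζ * (1 / Real.log n) ^ (ζ - 1)) ^ k := by gcongr
    _ = _ := by rw [Real.div_rpow zero_le_one hL.le, Real.one_rpow, mul_one_div]

lemma tendsto_div_log_rpow_atTop (a : ℝ) {p : ℝ} (hp : 0 < p) :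
    Tendsto (fun n : ℕ => a / Real.log n ^ p) atTop (𝓝 0) :=
  tendsto_const_nhds.div_atTop <|
    (tendsto_rpow_atTop hp).comp (Real.tendsto_log_atTop.comp tendsto_natCast_atTop_atTop)

lemma sum_Icc_one_pow_le {r : ℝ} (hr0 : 0 ≤ r) (hr1 : r < 1) (n : ℕ) :
    ∑ k ∈ Icc 1 n, r ^ k ≤ r / (1 - r) := by
  rw [← Ico_add_one_right_eq_Icc]
  simpa only [pow_one] using geom_sum_Ico_le_of_lt_one (m := 1) (n := n + 1) hr0 hr1

/-- For `G(n, lam/n)` with `lam > 0` fixed and `ζ > 1`, the probability that some nonempty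
`A` with `|A| ≤ n/log n` satisfies `|E(A)| > ζ|A|` tends to `0`; more precisely it is at most
`Σ_{k ≤ n/log n} C(n,k)·P[Bin(C(k,2), lam/n) > ζk]`. -/
theorem dense_small_subgraph_unlikely (lam ζ : ℝ) (hlam : 0 < lam) (hζ : 1 < ζ) :
    Filter.Tendsto (fun n => badProb lam ζ n) Filter.atTop (nhds 0) ∧
    ∀ n : ℕ, lam ≤ (n : ℝ) →
      badProb lam ζ n ≤
        ∑ k ∈ Finset.Icc 1 n,
          if (k : ℝ) ≤ (n : ℝ) / Real.log n then
            (n.choose k : ℝ) * binomTailGT (k.choose 2) (lam / n) (ζ * k)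
          else 0 := by
  have hbound := fun (n : ℕ) (hn : lam ≤ n) =>
    badProb_le_sum_choose_mul_binomTailGT (ζ := ζ) hlam.le hn
  refine ⟨?_, hbound⟩
  set c := 3 * lam / (2 * ζ)
  set r : ℕ → ℝ := fun n => 3 * c ^ ζ / Real.log n ^ (ζ - 1)
  have hr : Tendsto r atTop (𝓝 0) := tendsto_div_log_rpow_atTop _ (by linarith)
  have hgeom : Tendsto (fun n => r n / (1 - r n)) atTop (𝓝 0) := by
    have h := hr.div (tendsto_const_nhds.sub hr) (by norm_num : (1 : ℝ) - 0 ≠ 0)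
    rwa [sub_zero, zero_div] at h
  refine squeeze_zero' ?_ ?_ hgeom
  · filter_upwards [eventually_ge_atTop ⌈lam⌉₊] with n hn
    exact badProb_nonneg hlam.le (Nat.ceil_le.1 hn)
  filter_upwards [eventually_ge_atTop ⌈lam⌉₊,
    (Real.tendsto_log_atTop.comp tendsto_natCast_atTop_atTop).eventually_ge_atTop c,
    hr.eventually (gt_mem_nhds one_pos)] with n hn hc hr1
  calc badProb lam ζ n ≤ _ := hbound n (Nat.ceil_le.1 hn)
    _ ≤ ∑ k ∈ Icc 1 n, r n ^ k := sum_le_sum fun k hk => by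
        split_ifs with hkn
        · exact choose_mul_binomTailGT_le hlam hζ.le (Nat.ceil_le.1 hn) hc (mem_Icc.1 hk).1 hkn
        · positivity
    _ ≤ r n / (1 - r n) := sum_Icc_one_pow_le (by positivity) hr1 n
end
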